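/- Let (V_t)_{t≥0} be a sequence of nonnegative real numbers and φ : (0,∞) → (0,∞) a concave (hence non-decreasing) function such that V_{t+1} - V_t ≤ φ(V_t) for all t. Let H(w) = ∫_{V_0}^w dv/φ(v) with inverse H⁻¹. Then V_t ≤ H⁻¹(t) for all integers t ≥ 0. -/

import Mathlib

open Topology Filter Set

/-- A concave function that is positive on `[0, ∞)` is non-decreasing on `[0, ∞)`. -/
lemma phi_mono_aux (φ : ℝ → ℝ)
    (hφpos : ∀ x : ℝ, 0 ≤ x → 0 < φ x)
    (hconc : ∀ x y t : ℝ, 0 ≤ x → 0 ≤ y → 0 ≤ t → t ≤ 1 →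
      t * φ x + (1 - t) * φ y ≤ φ (t * x + (1 - t) * y)) :
    ∀ x y : ℝ, 0 ≤ x → x ≤ y → φ x ≤ φ y := by
  intro x y hx0 hxy
  rcases eq_or_lt_of_le hxy with rfl | hlt
  · exact le_rfl
  by_contra hcon
  push_neg at hcon
  have hd : 0 < φ x - φ y := by linarith
  set z : ℝ := max y ((y * φ x - x * φ y) / (φ x - φ y)) + 1 with hz
  have hyz : y < z := lt_of_le_of_lt (le_max_left _ _) (lt_add_one _)
  have hz0 : 0 ≤ z := by linarith [hx0, hlt.le, hyz.le]
  have hzq : (y * φ x - x * φ y) / (φ x - φ y) ≤ z :=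
    (le_max_right _ _).trans (lt_add_one _).le
  have hzd : y * φ x - x * φ y ≤ z * (φ x - φ y) := by
    rw [div_le_iff₀ hd] at hzq
    linarith
  have hzx : 0 < z - x := by linarith
  set t : ℝ := (z - y) / (z - x) with ht
  have ht0 : 0 ≤ t := div_nonneg (by linarith) hzx.le
  have ht1 : t ≤ 1 := (div_le_one hzx).mpr (by linarith)
  have hty : t * x + (1 - t) * z = y := by
    field_simp [ht]
    have h' : t * (z - x) = z - y := by rw [ht]; exact div_mul_cancel₀ _ hzx.ne'
    linarith
  have hkey := hconc x z t hx0 hz0 ht0 ht1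
  rw [hty] at hkey
  have hφz := hφpos z hz0
  have hmul : (t * φ x + (1 - t) * φ z) * (z - x) = (z - y) * φ x + (y - x) * φ z := by
    field_simp [ht]
    have h' : t * (z - x) = z - y := by rw [ht]; exact div_mul_cancel₀ _ hzx.ne'
    linear_combination (φ x - φ z) * h'
  nlinarith [mul_le_mul_of_nonneg_right hkey hzx.le]

/-- If `f' = φ ∘ f` on `[0, ∞)` with `φ > 0` on `[0, ∞)`, then after any point `a ≥ 0`
where `f a ≥ 0`, `f` is non-decreasing. -/
lemma mono_after (f φ : ℝ → ℝ)
    (hφpos : ∀ x : ℝ, 0 ≤ x → 0 < φ x)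
    (hf : ∀ s : ℝ, 0 ≤ s → HasDerivAt f (φ (f s)) s)
    (a : ℝ) (ha : 0 ≤ a) (hfa : 0 ≤ f a) :
    ∀ b, a ≤ b → f a ≤ f b := by
  by_contra hcon
  push_neg at hcon
  obtain ⟨b, hab, hb⟩ := hcon
  set B := {s : ℝ | a ≤ s ∧ f s < f a} with hB
  have hBne : B.Nonempty := ⟨b, hab, hb⟩
  have hBbd : BddBelow B := ⟨a, fun s hs => hs.1⟩
  set s₀ := sInf B with hs₀
  have hs₀a : a ≤ s₀ := le_csInf hBne fun s hs => hs.1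
  have hs₀0 : 0 ≤ s₀ := ha.trans hs₀a
  have hfc : ContinuousAt f s₀ := (hf s₀ hs₀0).continuousAt
  have h1 : f s₀ ≤ f a := by
    have hcl : s₀ ∈ closure B := csInf_mem_closure hBne hBbd
    haveI hne : (𝓝[B] s₀).NeBot := mem_closure_iff_nhdsWithin_neBot.mp hcl
    have htd : Filter.Tendsto f (𝓝[B] s₀) (𝓝 (f s₀)) := hfc.continuousWithinAt
    refine le_of_tendsto htd ?_
    filter_upwards [self_mem_nhdsWithin] with u hu
    exact hu.2.le
  have h2 : f a ≤ f s₀ := by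
    rcases eq_or_lt_of_le hs₀a with h | h
    · rw [← h]
    · have htd : Filter.Tendsto f (𝓝[<] s₀) (𝓝 (f s₀)) := hfc.continuousWithinAt
      refine ge_of_tendsto htd ?_
      filter_upwards [Ioo_mem_nhdsLT_of_mem (Set.mem_Ioc.mpr ⟨h, le_refl _⟩)] with u hu
      have hunB : u ∉ B := fun huB => not_lt.mpr (csInf_le hBbd huB) hu.2
      by_contra hfu
      exact hunB ⟨hu.1.le, by linarith [not_le.mp hfu]⟩
  have hfs₀ : f s₀ = f a := le_antisymm h1 h2
  have hd := hf s₀ hs₀0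
  rw [hfs₀] at hd
  have hpos : 0 < φ (f a) := hφpos _ hfa
  have hslope := hasDerivAt_iff_tendsto_slope.mp hd
  have hev : ∀ᶠ s in 𝓝[>] s₀, 0 < slope f s₀ s := by
    have hmono : 𝓝[>] s₀ ≤ 𝓝[≠] s₀ :=
      nhdsWithin_mono _ (fun x hx => hx.ne')
    exact (hslope.mono_left hmono).eventually (eventually_gt_nhds hpos)
  obtain ⟨u, hu, hsub⟩ := mem_nhdsGT_iff_exists_Ioo_subset.mp hev
  have hlt : s₀ < u := hu
  obtain ⟨c, hcB, hcu⟩ := (csInf_lt_iff hBbd hBne).mp (lt_of_eq_of_lt hs₀.symm hlt)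
  have hcs₀ : s₀ ≤ c := csInf_le hBbd hcB
  have hcne : s₀ < c := by
    rcases eq_or_lt_of_le hcs₀ with h | h
    · exfalso; rw [← h] at hcB; exact absurd hcB.2 (by rw [hfs₀]; exact lt_irrefl _)
    · exact h
  have hsl : 0 < slope f s₀ c := hsub ⟨hcne, hcu⟩
  rw [slope_def_field] at hsl
  have hcs : 0 < c - s₀ := sub_pos.mpr hcne
  have hfin : 0 < f c - f s₀ := by
    have h' := mul_pos hsl hcs
    rwa [div_mul_cancel₀ _ (ne_of_gt hcs)] at h'
  have := hcB.2
  rw [← hfs₀] at this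
  linarith

/-- If `V_{t+1} - V_t ≤ φ(V_t)` for a concave positive `φ` and `H⁻¹` solves
`H⁻¹(0) = V_0`, `(H⁻¹)'(s) = φ(H⁻¹(s))`, then `V_t ≤ H⁻¹(t)` for all integers `t ≥ 0`. -/
theorem lyapunov_upper_bound (V : ℕ → ℝ) (hV : ∀ t, 0 ≤ V t)
    (φ : ℝ → ℝ)
    (hφpos : ∀ x : ℝ, 0 ≤ x → 0 < φ x)
    (hconc : ∀ x y t : ℝ, 0 ≤ x → 0 ≤ y → 0 ≤ t → t ≤ 1 →
      t * φ x + (1 - t) * φ y ≤ φ (t * x + (1 - t) * y))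
    (hdrift : ∀ t : ℕ, V (t + 1) - V t ≤ φ (V t))
    (Hinv : ℝ → ℝ)
    (hHinv0 : Hinv 0 = V 0)
    (hHinvDeriv : ∀ s : ℝ, 0 ≤ s → HasDerivAt Hinv (φ (Hinv s)) s) :
    ∀ t : ℕ, V t ≤ Hinv t := by
  have hmonoφ := phi_mono_aux φ hφpos hconc
  intro t
  induction t with
  | zero => simp [hHinv0]
  | succ n ih =>
    have hHn0 : (0:ℝ) ≤ Hinv n := le_trans (hV n) ih
    have hn0 : (0:ℝ) ≤ (n:ℝ) := Nat.cast_nonneg n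
    have hmono := mono_after Hinv φ hφpos hHinvDeriv (n:ℝ) hn0 hHn0
    -- MVT on [n, n+1]
    have hlt : (n:ℝ) < (n:ℝ) + 1 := by linarith
    have hcont : ContinuousOn Hinv (Set.Icc (n:ℝ) ((n:ℝ)+1)) := by
      intro x hx
      exact ((hHinvDeriv x (le_trans hn0 hx.1)).continuousAt).continuousWithinAt
    have hderiv : ∀ x ∈ Set.Ioo (n:ℝ) ((n:ℝ)+1), HasDerivAt Hinv (φ (Hinv x)) x :=
      fun x hx => hHinvDeriv x (le_trans hn0 hx.1.le)
    obtain ⟨c, hc, hceq⟩ := exists_hasDerivAt_eq_slope Hinv (fun x => φ (Hinv x)) hlt hcont hderiv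
    have hHc : Hinv (n:ℝ) ≤ Hinv c := hmono c hc.1.le
    have hstep : Hinv (n:ℝ) + φ (Hinv (n:ℝ)) ≤ Hinv ((n:ℝ)+1) := by
      have : φ (Hinv c) = Hinv ((n:ℝ)+1) - Hinv (n:ℝ) := by
        rw [hceq]; field_simp; ring
      have h2 : φ (Hinv (n:ℝ)) ≤ φ (Hinv c) := hmonoφ _ _ hHn0 hHc
      linarith
    have := hdrift n
    have h3 : φ (V n) ≤ φ (Hinv (n:ℝ)) := hmonoφ _ _ (hV n) ih
    push_cast
    push_cast at hstep
    linarith
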